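/- arXiv:1403.2195 — 3 statements merged into one kernel-verified Lean document; each statement's English description precedes it below -/
import Mathlib

section
/- For n = 2^k with k ∈ ℕ, any a > 0, and any y > 0, the L_n-transform of x ↦ J₀(2 a^{n/2} x^{n/2}) satisfies ∫₀^∞ x^{n−1} exp(−x^n y^n) J₀(2 a^{n/2} x^{n/2}) dx = (1/(n y^n)) exp(−a^n/y^n), where J₀ is given by its power series, so that J₀(2 a^{n/2} x^{n/2}) = ∑_{m=0}^∞ (−1)^m (a x)^{m n}/(m!)². -/
open MeasureTheory Set Real Nat

/-!
Write `J₀(2 a^{n/2} x^{n/2}) = ∑ₘ sᵐ x^{mn} / (m!)²` with `s = -aⁿ` and integrate termwise. The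
substitution `t = xⁿ` turns each term into a Gamma integral,
`∫₀^∞ x^{n-1+mn} e^{-c xⁿ} dx = m! / (n c^{m+1})`, so one factor `m!` cancels and what remains is
`(1/(n c)) ∑ₘ (s/c)ᵐ / m! = exp(s/c) / (n c)`. Termwise integration is legitimate because the same
computation with `|s|` in place of `s` gives a convergent series.
-/

section
variable {n : ℕ} {c : ℝ}

lemma integrableOn_pow_mul_exp_neg_mul_pow (hn : 0 < n) (hc : 0 < c) (p : ℕ) :
    IntegrableOn (fun x : ℝ => x ^ p * exp (-(c * x ^ n))) (Ioi 0) := by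
  refine (integrableOn_rpow_mul_exp_neg_mul_rpow (s := (p : ℝ)) (p := (n : ℝ))
    (by linarith [p.cast_nonneg (α := ℝ)]) (by exact_mod_cast hn) hc).congr_fun
    (fun x _ => ?_) measurableSet_Ioi
  simp only [rpow_natCast, neg_mul]

lemma integral_pow_mul_exp_neg_mul_pow (hn : 0 < n) (hc : 0 < c) (m : ℕ) :
    ∫ x in Ioi (0 : ℝ), x ^ (n - 1 + m * n) * exp (-(c * x ^ n)) = m ! / (n * c ^ (m + 1)) := by
  have hn' : (n : ℝ) ≠ 0 := by positivity
  have hexp : ((n - 1 + m * n : ℕ) : ℝ) + 1 = (m + 1) * n := by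
    push_cast [Nat.cast_sub (Nat.one_le_iff_ne_zero.mpr hn.ne')]
    ring
  have hq : -1 < ((n - 1 + m * n : ℕ) : ℝ) := by linarith [(n - 1 + m * n).cast_nonneg (α := ℝ)]
  calc ∫ x in Ioi (0 : ℝ), x ^ (n - 1 + m * n) * exp (-(c * x ^ n))
      = ∫ x in Ioi (0 : ℝ), x ^ ((n - 1 + m * n : ℕ) : ℝ) * exp (-c * x ^ (n : ℝ)) := by
        simp only [rpow_natCast, neg_mul]
    _ = c ^ (-((m : ℝ) + 1)) * (1 / n) * Gamma ((m : ℝ) + 1) := by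
        rw [integral_rpow_mul_exp_neg_mul_rpow (by positivity) hq hc, neg_div, hexp,
          mul_div_cancel_right₀ _ hn']
    _ = m ! / (n * c ^ (m + 1)) := by
        rw [Gamma_nat_eq_factorial, rpow_neg hc.le, ← Nat.cast_add_one, rpow_natCast]
        field_simp

lemma integral_tsum_mul_pow_mul_exp_neg_mul_pow (hn : 0 < n) (hc : 0 < c) {b : ℕ → ℝ}
    (hb : Summable fun m => |b m| * (m ! / (n * c ^ (m + 1)))) :
    ∫ x in Ioi (0 : ℝ), ∑' m, b m * (x ^ (n - 1 + m * n) * exp (-(c * x ^ n)))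
      = ∑' m, b m * (m ! / (n * c ^ (m + 1))) := by
  have hnorm (m : ℕ) : ∫ x in Ioi (0 : ℝ), ‖b m * (x ^ (n - 1 + m * n) * exp (-(c * x ^ n)))‖
      = |b m| * (m ! / (n * c ^ (m + 1))) := by
    rw [← integral_pow_mul_exp_neg_mul_pow hn hc m, ← integral_const_mul]
    refine setIntegral_congr_fun measurableSet_Ioi fun x (hx : 0 < x) => ?_
    rw [norm_mul, Real.norm_eq_abs, Real.norm_of_nonneg (by positivity)]
  rw [← integral_tsum_of_summable_integral_norm
    (fun m => (integrableOn_pow_mul_exp_neg_mul_pow hn hc _).const_mul (b m))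
    (by simpa only [hnorm] using hb)]
  simp_rw [integral_const_mul, integral_pow_mul_exp_neg_mul_pow hn hc]

lemma pow_div_factorial_sq_mul_factorial_div (s : ℝ) (hc : 0 < c) (m : ℕ) :
    s ^ m / (m ! : ℝ) ^ 2 * (m ! / (n * c ^ (m + 1))) = 1 / (n * c) * ((s / c) ^ m / m !) := by
  have := m.factorial_pos.ne'
  have := hc.ne'
  rw [div_pow]
  field_simp
  ring

end

theorem Ln_besselJ_zero_general (k n : ℕ) (hn : n = 2 ^ k) (a y : ℝ) (hy : 0 < y) :
    ∫ x in Ioi (0 : ℝ), x ^ (n - 1) * Real.exp (-(x ^ n * y ^ n)) *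
        (∑' m : ℕ, (-1 : ℝ) ^ m * (a * x) ^ (m * n) / ((m.factorial : ℝ)) ^ 2)
      = (1 / (n * y ^ n)) * Real.exp (-(a ^ n / y ^ n)) := by
  have hn0 : 0 < n := hn ▸ Nat.two_pow_pos k
  have hc : 0 < y ^ n := pow_pos hy n
  have hterm (x : ℝ) (m : ℕ) : x ^ (n - 1) * exp (-(x ^ n * y ^ n)) *
      ((-1 : ℝ) ^ m * (a * x) ^ (m * n) / (m ! : ℝ) ^ 2)
      = (-a ^ n) ^ m / (m ! : ℝ) ^ 2 * (x ^ (n - 1 + m * n) * exp (-(y ^ n * x ^ n))) := by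
    rw [neg_pow (a ^ n), ← pow_mul, mul_pow, pow_add, mul_comm n m, mul_comm (x ^ n)]
    ring
  have hsum : Summable fun m =>
      |(-a ^ n) ^ m / (m ! : ℝ) ^ 2| * (m ! / (n * (y ^ n) ^ (m + 1))) := by
    simp_rw [abs_div, abs_pow, Nat.abs_cast, pow_div_factorial_sq_mul_factorial_div _ hc]
    exact (summable_pow_div_factorial _).mul_left _
  simp_rw [← tsum_mul_left, hterm]
  rw [integral_tsum_mul_pow_mul_exp_neg_mul_pow hn0 hc hsum]
  simp_rw [pow_div_factorial_sq_mul_factorial_div _ hc]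
  rw [tsum_mul_left, neg_div, exp_eq_exp_ℝ, NormedSpace.exp_eq_tsum_div]

/-- For `n = 2^k`, `a > 0` and `y > 0`,
`Lₙ{J₀(2 a^{n/2} x^{n/2}); y} = (1/(n yⁿ)) exp(-aⁿ/yⁿ)`, where `J₀` is given by its
power series, so that `J₀(2 a^{n/2} x^{n/2}) = ∑ₘ (-1)^m (a x)^{m n}/(m!)²`. -/
theorem Ln_besselJ_zero (k n : ℕ) (hn : n = 2 ^ k) (a y : ℝ) (ha : 0 < a) (hy : 0 < y) :
    ∫ x in Ioi (0 : ℝ), x ^ (n - 1) * Real.exp (-(x ^ n * y ^ n)) *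
        (∑' m : ℕ, (-1 : ℝ) ^ m * (a * x) ^ (m * n) / ((m.factorial : ℝ)) ^ 2)
      = (1 / (n * y ^ n)) * Real.exp (-(a ^ n / y ^ n)) :=
  Ln_besselJ_zero_general k n hn a y hy
end

section
/- For n = 2^k with k ∈ ℕ, any a > 0, any real v > −1, and any y > 0, the L_n-transform of x ↦ x^{n v/2} J_v(2 a^{n/2} x^{n/2}) satisfies ∫₀^∞ x^{n−1} exp(−x^n y^n) · x^{n v/2} J_v(2 a^{n/2} x^{n/2}) dx = (1/n) a^{n v/2} y^{−n(v+1)} exp(−a^n/y^n), where x^{n v/2} J_v(2 a^{n/2} x^{n/2}) = ∑_{m=0}^∞ (−1)^m a^{n m + n v/2} x^{n m + n v}/(m! · Γ(m + v + 1)). -/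
open MeasureTheory Set

/-!
Each term of the series is a power `x ^ (n * s)` times a constant. Substituting `u = xⁿ`, the
`Lₙ`-transform of such a power is a Gamma integral, `Γ(s + 1) / (n y^{n(s+1)})`. With
`s = m + v` the factor `Γ(m + v + 1)` cancels the one in the coefficient, so the term-by-term
transform is the exponential series of `-aⁿ/yⁿ`, scaled by `a^{nv/2} y^{-n(v+1)} / n`. The
series of absolute values of the transformed terms converges as well, which justifies
exchanging sum and integral.
-/

noncomputable def lnTransform (n : ℕ) (f : ℝ → ℝ) (y : ℝ) : ℝ :=
  ∫ x in Ioi (0 : ℝ), x ^ (n - 1) * Real.exp (-(x ^ n * y ^ n)) * f x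

section LnTransform

variable {n : ℕ} {y s : ℝ}

lemma lnKernel_mul_rpow_eq (hn : 0 < n) {x : ℝ} (hx : 0 < x) :
    x ^ (n - 1) * Real.exp (-(x ^ n * y ^ n)) * x ^ ((n : ℝ) * s) =
      x ^ ((n : ℝ) * s + (n - 1)) * Real.exp (-(y ^ n) * x ^ (n : ℝ)) := by
  rw [Real.rpow_add hx, ← Real.rpow_natCast x (n - 1), Nat.cast_sub hn, Nat.cast_one,
    Real.rpow_natCast, neg_mul, mul_comm (y ^ n)]
  ring

lemma integrableOn_lnKernel_mul_rpow (hn : 0 < n) (hy : 0 < y) (hs : -1 < s) :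
    IntegrableOn (fun x ↦ x ^ (n - 1) * Real.exp (-(x ^ n * y ^ n)) * x ^ ((n : ℝ) * s))
      (Ioi 0) := by
  have hn' : (1 : ℝ) ≤ n := by exact_mod_cast hn
  refine (integrableOn_rpow_mul_exp_neg_mul_rpow ?_ (by positivity) (by positivity)).congr_fun
    (fun x hx ↦ (lnKernel_mul_rpow_eq hn hx).symm) measurableSet_Ioi
  nlinarith

lemma lnTransform_rpow (hn : 0 < n) (hy : 0 < y) (hs : -1 < s) :
    lnTransform n (fun x ↦ x ^ ((n : ℝ) * s)) y =
      1 / n * y ^ (-(n : ℝ) * (s + 1)) * Real.Gamma (s + 1) := by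
  have hn' : (0 : ℝ) < n := by exact_mod_cast hn
  have hexponent : ((n : ℝ) * s + (n - 1) + 1) / n = s + 1 := by field_simp; ring
  rw [lnTransform, setIntegral_congr_fun measurableSet_Ioi (fun x hx ↦ lnKernel_mul_rpow_eq hn hx),
    integral_rpow_mul_exp_neg_mul_rpow hn' (by nlinarith) (by positivity), neg_div, hexponent,
    ← Real.rpow_natCast, ← Real.rpow_mul hy.le]
  ring_nf

lemma lnTransform_rpow_nonneg (hn : 0 < n) (hy : 0 < y) (hs : -1 < s) :
    0 ≤ lnTransform n (fun x ↦ x ^ ((n : ℝ) * s)) y := by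
  rw [lnTransform_rpow hn hy hs]
  have := Real.Gamma_pos_of_pos (show 0 < s + 1 by linarith)
  positivity

lemma lnTransform_tsum (hn : 0 < n) (hy : 0 < y) {c s : ℕ → ℝ} (hs : ∀ m, -1 < s m)
    (hsum : Summable fun m ↦ c m * lnTransform n (fun x ↦ x ^ ((n : ℝ) * s m)) y) :
    lnTransform n (fun x ↦ ∑' m, c m * x ^ ((n : ℝ) * s m)) y =
      ∑' m, c m * lnTransform n (fun x ↦ x ^ ((n : ℝ) * s m)) y := by
  set K : ℝ → ℝ := fun x ↦ x ^ (n - 1) * Real.exp (-(x ^ n * y ^ n))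
  set F : ℕ → ℝ → ℝ := fun m x ↦ c m * (K x * x ^ ((n : ℝ) * s m))
  have hF_int (m : ℕ) : IntegrableOn (F m) (Ioi 0) :=
    (integrableOn_lnKernel_mul_rpow hn hy (hs m)).const_mul (c m)
  have hF_norm (m : ℕ) : ∫ x in Ioi 0, ‖F m x‖ =
      |c m * lnTransform n (fun x ↦ x ^ ((n : ℝ) * s m)) y| := by
    rw [abs_mul, abs_of_nonneg (lnTransform_rpow_nonneg hn hy (hs m)), lnTransform,
      ← integral_const_mul]
    refine setIntegral_congr_fun measurableSet_Ioi fun x (hx : 0 < x) ↦ ?_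
    simp only [F, K, norm_mul, Real.norm_eq_abs, abs_pow, abs_of_pos hx, Real.abs_exp,
      abs_of_pos (Real.rpow_pos_of_pos hx _)]
  calc lnTransform n (fun x ↦ ∑' m, c m * x ^ ((n : ℝ) * s m)) y
      = ∫ x in Ioi 0, ∑' m, F m x := by
        refine setIntegral_congr_fun measurableSet_Ioi fun x _ ↦ ?_
        simp only [F, K, ← tsum_mul_left, mul_left_comm]
    _ = ∑' m, ∫ x in Ioi 0, F m x :=
        (integral_tsum_of_summable_integral_norm hF_int
          ((funext hF_norm).symm ▸ hsum.abs)).symm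
    _ = ∑' m, c m * lnTransform n (fun x ↦ x ^ ((n : ℝ) * s m)) y := by
        simp only [F, integral_const_mul, lnTransform, K]

end LnTransform

lemma besselCoeff_mul_lnTransform_rpow {n : ℕ} (hn : 0 < n) {a v y : ℝ} (ha : 0 < a)
    (hv : -1 < v) (hy : 0 < y) (m : ℕ) :
    (-1 : ℝ) ^ m * a ^ ((n : ℝ) * m + n * v / 2) / (m.factorial * Real.Gamma (m + v + 1)) *
        lnTransform n (fun x ↦ x ^ ((n : ℝ) * (m + v))) y =
      1 / n * a ^ ((n : ℝ) * v / 2) * y ^ (-(n : ℝ) * (v + 1)) *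
        ((-(a ^ n / y ^ n)) ^ m / m.factorial) := by
  have hm : (0 : ℝ) ≤ m := m.cast_nonneg
  have hΓ : Real.Gamma (m + v + 1) ≠ 0 := (Real.Gamma_pos_of_pos (by linarith)).ne'
  have ha_pow : a ^ ((n : ℝ) * m + n * v / 2) = (a ^ n) ^ m * a ^ ((n : ℝ) * v / 2) := by
    rw [Real.rpow_add ha, ← pow_mul, ← Real.rpow_natCast]
    push_cast
    rfl
  have hy_pow : y ^ (-(n : ℝ) * (m + v + 1)) = ((y ^ n) ^ m)⁻¹ * y ^ (-(n : ℝ) * (v + 1)) := by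
    rw [show -(n : ℝ) * (m + v + 1) = -(n * m : ℕ) + -(n : ℝ) * (v + 1) by push_cast; ring,
      Real.rpow_add hy, Real.rpow_neg hy.le, Real.rpow_natCast, pow_mul]
  rw [lnTransform_rpow hn hy (by linarith), hy_pow, ha_pow, neg_pow (a ^ n / y ^ n), div_pow]
  field_simp

/-- For `n = 2^k`, `a > 0`, `v > -1` real and `y > 0`,
`Lₙ{x^{nv/2} J_v(2 a^{n/2} x^{n/2}); y} = (1/n) a^{nv/2} y^{-n(v+1)} exp(-aⁿ/yⁿ)`,
where `x^{nv/2} J_v(2 a^{n/2} x^{n/2}) = ∑ₘ (-1)^m a^{nm + nv/2} x^{nm + nv}/(m! Γ(m+v+1))`. -/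
theorem Ln_besselJ (k n : ℕ) (hn : n = 2 ^ k) (a v y : ℝ) (ha : 0 < a) (hv : -1 < v)
    (hy : 0 < y) :
    ∫ x in Ioi (0 : ℝ), x ^ (n - 1) * Real.exp (-(x ^ n * y ^ n)) *
        (∑' m : ℕ, (-1 : ℝ) ^ m * a ^ ((n : ℝ) * m + n * v / 2) * x ^ ((n : ℝ) * m + n * v) /
          (m.factorial * Real.Gamma (m + v + 1)))
      = (1 / n) * a ^ ((n : ℝ) * v / 2) * y ^ (-(n : ℝ) * (v + 1)) *
          Real.exp (-(a ^ n / y ^ n)) := by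
  have hn0 : 0 < n := hn ▸ by positivity
  set c : ℕ → ℝ := fun m ↦
    (-1 : ℝ) ^ m * a ^ ((n : ℝ) * m + n * v / 2) / (m.factorial * Real.Gamma (m + v + 1))
  have hseries : (fun x : ℝ ↦ ∑' m : ℕ, (-1 : ℝ) ^ m * a ^ ((n : ℝ) * m + n * v / 2) *
      x ^ ((n : ℝ) * m + n * v) / (m.factorial * Real.Gamma (m + v + 1))) =
      fun x ↦ ∑' m, c m * x ^ ((n : ℝ) * (m + v)) := by
    simp only [c, mul_add, mul_div_right_comm]
  have hterms := funext (besselCoeff_mul_lnTransform_rpow hn0 ha hv hy)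
  change lnTransform n _ y = _
  rw [hseries, lnTransform_tsum hn0 hy (fun m ↦ by have := m.cast_nonneg (α := ℝ); linarith)
      (hterms ▸ (Real.summable_pow_div_factorial _).mul_left _),
    hterms, tsum_mul_left, Real.exp_eq_exp_ℝ, NormedSpace.exp_eq_tsum_div]
end

section
/- For n = 2^k with k ∈ ℕ, any a > 0, and any y > 0, the L_n-transform of x ↦ erfc((1/2) a^{n/2} x^{−n/2}) satisfies ∫₀^∞ x^{n−1} exp(−x^n y^n) erfc((1/2) a^{n/2} x^{−n/2}) dx = (1/n) y^{−n} exp(−a^{n/2} y^{n/2}), where erfc(t) = (2/√π) ∫_t^∞ exp(−u²) du. -/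
/-! The substitution `t = xⁿ` turns the `Lₙ`-transform into `1/n` times the Laplace transform
of `t ↦ erfc (c / (2 √t))`, `c = a^{n/2}`, at `s = yⁿ`. Writing `erfc` as a Gaussian tail and
exchanging the two integrals (the region `c / (2 √t) < u` is also `(c / 2u)² < t`) leaves
`(2 / (s √π)) ∫₀^∞ exp (-(u² + (c √s / 2)² / u²)) du`. This is the Cauchy–Schlömilch integral:
since `(α u)² + (β / u)² = (α u - β / u)² + 2 α β`, it reduces to
`∫₀^∞ exp (-(α u - β / u)²) du = √π / (2 α)`, which follows because `u ↦ α u - β / u` maps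
`(0, ∞)` onto `ℝ`, while the inversion `u ↦ β / (α u)` exchanges the two halves
`α` and `β / u²` of its derivative. -/

open MeasureTheory Set

/-- The complementary error function `erfc(t) = (2/√π) ∫_t^∞ exp(-u²) du`. -/
noncomputable def erfc (t : ℝ) : ℝ :=
  (2 / Real.sqrt Real.pi) * ∫ u in Ioi t, Real.exp (-u ^ 2)

open Real

theorem sqrt_pow_eq_rpow_div_two {x : ℝ} (hx : 0 ≤ x) (n : ℕ) : √(x ^ n) = x ^ ((n : ℝ) / 2) := by
  rw [sqrt_eq_rpow, ← rpow_natCast, ← rpow_mul hx, mul_one_div]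

theorem div_two_mul_sqrt_lt_iff {c t u : ℝ} (hc : 0 ≤ c) (ht : 0 < t) (hu : 0 < u) :
    c / (2 * √t) < u ↔ (c / (2 * u)) ^ 2 < t := by
  rw [← Real.lt_sqrt (by positivity), div_lt_iff₀ (by positivity), div_lt_iff₀ (by positivity)]
  ring_nf

section IoiIntegrals

variable {E : Type*} [NormedAddCommGroup E] [NormedSpace ℝ E]

theorem setIntegral_Ioi_indicator_Ioi {a b : ℝ} (hab : a ≤ b) (g : ℝ → E) :
    ∫ x in Ioi a, (Ioi b).indicator g x = ∫ x in Ioi b, g x := by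
  rw [setIntegral_indicator measurableSet_Ioi, Ioi_inter_Ioi, max_eq_right hab]

theorem integral_div_sq_smul_comp_div_Ioi (f : ℝ → E) {r : ℝ} (hr : 0 < r) :
    ∫ u in Ioi 0, (r / u ^ 2) • f (r / u) = ∫ u in Ioi 0, f u := by
  have hderiv : ∀ u ∈ Ioi (0 : ℝ), HasDerivWithinAt (r / ·) (-(r / u ^ 2)) (Ioi 0) u := by
    intro u hu
    simpa [div_eq_mul_inv] using ((hasDerivAt_inv (ne_of_gt hu)).const_mul r).hasDerivWithinAt
  have hinj : InjOn (r / ·) (Ioi (0 : ℝ)) := fun u _ v _ huv =>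
    inv_injective (mul_left_cancel₀ hr.ne' huv)
  have himage : (r / ·) '' Ioi (0 : ℝ) = Ioi 0 :=
    Subset.antisymm (fun _ ⟨u, hu, hv⟩ => hv ▸ div_pos hr hu)
      fun v hv => ⟨r / v, div_pos hr hv, div_div_cancel₀ hr.ne'⟩
  have hsubst := integral_image_eq_integral_abs_deriv_smul measurableSet_Ioi hderiv hinj f
  rw [himage] at hsubst
  rw [hsubst]
  refine setIntegral_congr_fun measurableSet_Ioi fun u (hu : 0 < u) => ?_
  rw [abs_neg, abs_of_pos (by positivity)]

theorem integral_pow_sub_one_smul_comp_pow_Ioi {n : ℕ} (hn : 0 < n) (g : ℝ → E) :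
    ∫ x in Ioi 0, x ^ (n - 1) • g (x ^ n) = (n : ℝ)⁻¹ • ∫ t in Ioi 0, g t := by
  have hn' : (0 : ℝ) < n := Nat.cast_pos.mpr hn
  rw [← integral_comp_rpow_Ioi_of_pos (g := g) hn', eq_inv_smul_iff₀ hn'.ne', ← integral_smul]
  refine setIntegral_congr_fun measurableSet_Ioi fun x _ => ?_
  rw [smul_smul, ← Nat.cast_pred hn, rpow_natCast, rpow_natCast]

end IoiIntegrals

section CauchySchlomilch

variable {α β : ℝ}

theorem hasDerivAt_mul_sub_div {u : ℝ} (hu : u ≠ 0) :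
    HasDerivAt (fun u => α * u - β / u) (α + β / u ^ 2) u := by
  simpa [div_eq_mul_inv] using
    ((hasDerivAt_id' u).const_mul α).fun_sub ((hasDerivAt_inv hu).const_mul β)

theorem strictMonoOn_mul_sub_div (hα : 0 < α) (hβ : 0 ≤ β) :
    StrictMonoOn (fun u => α * u - β / u) (Ioi 0) := fun u hu v _ huv => by
  have : β / v ≤ β / u := div_le_div_of_nonneg_left hβ hu huv.le
  dsimp only
  nlinarith

theorem image_mul_sub_div_Ioi (hα : 0 < α) (hβ : 0 < β) :
    (fun u => α * u - β / u) '' Ioi 0 = univ := by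
  refine eq_univ_of_forall fun w => ?_
  set D := √(w ^ 2 + 4 * α * β)
  have hD : D ^ 2 = w ^ 2 + 4 * α * β := Real.sq_sqrt (by positivity)
  have hwD : |w| < D := by
    rw [← Real.sqrt_sq_eq_abs]
    exact Real.sqrt_lt_sqrt (sq_nonneg w) (by nlinarith [mul_pos hα hβ])
  -- the positive root of `α x ^ 2 - w x - β`
  set x := (w + D) / (2 * α)
  have hx : 0 < x := div_pos (by linarith [neg_abs_le w]) (by positivity)
  have hroot : α * x ^ 2 = w * x + β := by
    simp only [x]
    field_simp
    nlinarith
  refine ⟨x, hx, ?_⟩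
  field_simp
  linarith

theorem integrableOn_and_integral_add_div_sq_mul_exp_neg_sq_mul_sub_div
    (hα : 0 < α) (hβ : 0 < β) :
    IntegrableOn (fun u => (α + β / u ^ 2) * exp (-(α * u - β / u) ^ 2)) (Ioi 0) ∧
      ∫ u in Ioi 0, (α + β / u ^ 2) * exp (-(α * u - β / u) ^ 2) = √π := by
  have hderiv : ∀ u ∈ Ioi (0 : ℝ),
      HasDerivWithinAt (fun u => α * u - β / u) (α + β / u ^ 2) (Ioi 0) u :=
    fun u hu => (hasDerivAt_mul_sub_div (ne_of_gt hu)).hasDerivWithinAt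
  have hinj := (strictMonoOn_mul_sub_div hα hβ.le).injOn
  have habs : ∀ u ∈ Ioi (0 : ℝ), |α + β / u ^ 2| = α + β / u ^ 2 := fun u _ =>
    abs_of_pos (by positivity)
  have hgauss : ∀ x : ℝ, exp (-x ^ 2) = exp (-1 * x ^ 2) := fun x => by ring_nf
  constructor
  · refine ((integrableOn_image_iff_integrableOn_abs_deriv_smul measurableSet_Ioi hderiv hinj
      (fun x => exp (-x ^ 2))).mp ?_).congr_fun (fun u hu => by simp [habs u hu]) measurableSet_Ioi
    rw [image_mul_sub_div_Ioi hα hβ, integrableOn_univ]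
    simpa only [← hgauss] using integrable_exp_neg_mul_sq one_pos
  · have hsubst := integral_image_eq_integral_abs_deriv_smul measurableSet_Ioi hderiv hinj
      (fun x => exp (-x ^ 2))
    rw [image_mul_sub_div_Ioi hα hβ, Measure.restrict_univ] at hsubst
    rw [← div_one π, ← integral_gaussian, ← funext hgauss, hsubst]
    exact setIntegral_congr_fun measurableSet_Ioi fun u hu => by simp [habs u hu]

theorem integral_exp_neg_sq_mul_sub_div (hα : 0 < α) (hβ : 0 < β) :
    ∫ u in Ioi 0, exp (-(α * u - β / u) ^ 2) = √π / (2 * α) := by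
  obtain ⟨hint, hval⟩ := integrableOn_and_integral_add_div_sq_mul_exp_neg_sq_mul_sub_div hα hβ
  set E := fun u => exp (-(α * u - β / u) ^ 2)
  have hE : IntegrableOn E (Ioi 0) := by
    refine (hint.const_mul α⁻¹).mono' (by fun_prop) ?_
    filter_upwards [ae_restrict_mem measurableSet_Ioi] with u (hu : 0 < u)
    rw [norm_of_nonneg (exp_pos _).le, ← mul_assoc, inv_mul_eq_div, add_div, div_self hα.ne']
    exact le_mul_of_one_le_left (exp_pos _).le (le_add_of_nonneg_right (by positivity))
  -- the inversion `u ↦ (β / α) / u` sends `α u - β / u` to its negative, so it fixes `E`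
  have hinversion : ∫ u in Ioi 0, β / u ^ 2 * E u = α * ∫ u in Ioi 0, E u := by
    rw [← integral_div_sq_smul_comp_div_Ioi E (div_pos hβ hα), ← integral_const_mul]
    refine setIntegral_congr_fun measurableSet_Ioi fun u (hu : 0 < u) => ?_
    have hEu : E (β / α / u) = E u := by
      simp only [E]
      congr 1
      field_simp
      ring
    rw [smul_eq_mul, hEu]
    field_simp
  have hsplit : ∫ u in Ioi 0, β / u ^ 2 * E u = √π - α * ∫ u in Ioi 0, E u := by
    rw [← hval, ← integral_const_mul, ← integral_sub hint (hE.const_mul α)]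
    congr 1 with u
    ring
  field_simp
  linarith

theorem integral_exp_neg_sq_mul_add_sq_div (hα : 0 < α) (hβ : 0 < β) :
    ∫ u in Ioi 0, exp (-((α * u) ^ 2 + (β / u) ^ 2)) = √π / (2 * α) * exp (-(2 * α * β)) := by
  rw [← integral_exp_neg_sq_mul_sub_div hα hβ, ← integral_mul_const]
  refine setIntegral_congr_fun measurableSet_Ioi fun u (hu : 0 < u) => ?_
  rw [← exp_add]
  congr 1
  field_simp
  ring

end CauchySchlomilch

theorem integral_exp_neg_div_sq_mul_mul_exp_neg_sq {s c : ℝ} (hs : 0 < s) (hc : 0 < c) :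
    ∫ u in Ioi 0, exp (-((c / (2 * u)) ^ 2 * s)) * exp (-u ^ 2) = √π / 2 * exp (-(c * √s)) := by
  have h := integral_exp_neg_sq_mul_add_sq_div one_pos (by positivity : 0 < c * √s / 2)
  rw [show √π / 2 * exp (-(c * √s)) = √π / (2 * 1) * exp (-(2 * 1 * (c * √s / 2))) by ring_nf,
    ← h]
  refine setIntegral_congr_fun measurableSet_Ioi fun u (hu : 0 < u) => ?_
  rw [← exp_add, div_div, div_pow (c * √s), mul_pow c, Real.sq_sqrt hs.le]
  ring_nf

theorem integral_exp_neg_mul_mul_erfc_div_sqrt {s c : ℝ} (hs : 0 < s) (hc : 0 < c) :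
    ∫ t in Ioi 0, exp (-(t * s)) * erfc (c / (2 * √t)) = exp (-(c * √s)) / s := by
  set μ := volume.restrict (Ioi (0 : ℝ))
  set F : ℝ × ℝ → ℝ := {z : ℝ × ℝ | c / (2 * √z.1) < z.2}.indicator
    fun z => exp (-(z.1 * s)) * exp (-z.2 ^ 2)
  have hF : Integrable F (μ.prod μ) := by
    have hexp : IntegrableOn (fun t => exp (-(t * s))) (Ioi 0) := by
      simpa [mul_comm] using exp_neg_integrableOn_Ioi 0 hs
    have hgauss : Integrable fun u : ℝ => exp (-u ^ 2) := by
      simpa using integrable_exp_neg_mul_sq one_pos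
    exact (hexp.mul_prod hgauss.integrableOn).indicator
      (measurableSet_lt (by fun_prop) (by fun_prop))
  have hinner_u : ∀ t, ∫ u in Ioi 0, F (t, u) = √π / 2 * (exp (-(t * s)) * erfc (c / (2 * √t))) := by
    intro t
    have hind : (fun u => F (t, u)) = (Ioi (c / (2 * √t))).indicator
        fun u => exp (-(t * s)) * exp (-u ^ 2) := by
      ext u
      simp only [F, indicator_apply, mem_ofPred_eq, mem_Ioi]
    rw [hind, setIntegral_Ioi_indicator_Ioi (by positivity), integral_const_mul, erfc]
    field_simp
  have hinner_t : ∀ u ∈ Ioi (0 : ℝ),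
      ∫ t in Ioi 0, F (t, u) = exp (-((c / (2 * u)) ^ 2 * s)) / s * exp (-u ^ 2) := by
    intro u (hu : 0 < u)
    have hind : ∀ t ∈ Ioi (0 : ℝ), F (t, u) = (Ioi ((c / (2 * u)) ^ 2)).indicator
        (fun t => exp (-(t * s)) * exp (-u ^ 2)) t := by
      intro t (ht : 0 < t)
      simp only [F, indicator_apply, mem_ofPred_eq, mem_Ioi, div_two_mul_sqrt_lt_iff hc.le ht hu]
    rw [setIntegral_congr_fun measurableSet_Ioi hind, setIntegral_Ioi_indicator_Ioi (by positivity),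
      integral_mul_const]
    congr 1
    simpa [mul_comm s, neg_mul] using integral_exp_mul_Ioi (neg_lt_zero.mpr hs) ((c / (2 * u)) ^ 2)
  calc ∫ t in Ioi 0, exp (-(t * s)) * erfc (c / (2 * √t))
      = 2 / √π * ∫ t in Ioi 0, ∫ u in Ioi 0, F (t, u) := by
        have hcancel : 2 / √π * (√π / 2) = 1 := by field_simp
        simp only [hinner_u]
        rw [integral_const_mul, ← mul_assoc, hcancel, one_mul]
    _ = 2 / √π * ∫ u in Ioi 0, ∫ t in Ioi 0, F (t, u) := by
        rw [integral_integral_swap (f := fun t u => F (t, u)) hF]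
    _ = 2 / (√π * s) * ∫ u in Ioi 0, exp (-((c / (2 * u)) ^ 2 * s)) * exp (-u ^ 2) := by
        rw [setIntegral_congr_fun measurableSet_Ioi hinner_t, ← integral_const_mul,
          ← integral_const_mul]
        refine setIntegral_congr_fun measurableSet_Ioi fun u _ => ?_
        field_simp
    _ = exp (-(c * √s)) / s := by
        rw [integral_exp_neg_div_sq_mul_mul_exp_neg_sq hs hc]
        field_simp

/-- For `n = 2^k`, `a > 0` and `y > 0`,
`Lₙ{erfc((1/2) a^{n/2} x^{-n/2}); y} = (1/n) y^{-n} exp(-a^{n/2} y^{n/2})`. -/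
theorem Ln_erfc (k n : ℕ) (hn : n = 2 ^ k) (a y : ℝ) (ha : 0 < a) (hy : 0 < y) :
    ∫ x in Ioi (0 : ℝ), x ^ (n - 1) * Real.exp (-(x ^ n * y ^ n)) *
        erfc ((1 / 2) * a ^ ((n : ℝ) / 2) * x ^ (-(n : ℝ) / 2))
      = (1 / n) * y ^ (-(n : ℝ)) * Real.exp (-(a ^ ((n : ℝ) / 2) * y ^ ((n : ℝ) / 2))) := by
  set c := a ^ ((n : ℝ) / 2)
  have hsubst := integral_pow_sub_one_smul_comp_pow_Ioi (hn ▸ Nat.two_pow_pos k)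
    fun t => exp (-(t * y ^ n)) * erfc (c / (2 * √t))
  simp only [smul_eq_mul] at hsubst
  have hintegrand : ∀ x ∈ Ioi (0 : ℝ),
      x ^ (n - 1) * exp (-(x ^ n * y ^ n)) * erfc (1 / 2 * c * x ^ (-(n : ℝ) / 2))
        = x ^ (n - 1) * (exp (-(x ^ n * y ^ n)) * erfc (c / (2 * √(x ^ n)))) := by
    intro x (hx : 0 < x)
    rw [neg_div, rpow_neg hx.le, ← sqrt_pow_eq_rpow_div_two hx.le, mul_assoc]
    congr 3
    ring
  rw [setIntegral_congr_fun measurableSet_Ioi hintegrand, hsubst,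
    integral_exp_neg_mul_mul_erfc_div_sqrt (pow_pos hy n) (rpow_pos_of_pos ha _),
    sqrt_pow_eq_rpow_div_two hy.le, rpow_neg hy.le, rpow_natCast]
  ring
end
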